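/- In any Nash equilibrium (α, β) of the classification game, for any v1, v2 with P_N(v1) > 0, P_N(v2) > 0, and R(v1) ≤ R(v2), the detection probabilities satisfy π_d^β(v1) ≤ π_d^β(v2). In particular, if P_N has full support, the equilibrium detection probability is a non-decreasing function of the attack reward. -/

import Mathlib

open Finset

/-- A probability distribution on a finite type. -/
def IsProb {X : Type*} [Fintype X] (μ : X → ℝ) : Prop :=
  (∀ x, 0 ≤ μ x) ∧ ∑ x, μ x = 1

/-- Probability of detection of attack vector `v` under defender mixed strategy `β`. -/
noncomputable def pid {V C : Type*} [Fintype C] (cl : C → V → Bool)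
    (β : C → ℝ) (v : V) : ℝ :=
  ∑ c, if cl c v then β c else 0

/-- Attacker's expected payoff: U^A(v,c) = R(v) − c_d·1[c(v)=1], bilinearly extended. -/
noncomputable def UA {V C : Type*} [Fintype V] [Fintype C] (cl : C → V → Bool)
    (R : V → ℝ) (cd : ℝ) (α : V → ℝ) (β : C → ℝ) : ℝ :=
  ∑ v, ∑ c, α v * (R v - cd * (if cl c v then 1 else 0)) * β c

/-- Defender's expected payoff:
U^D(v,c) = −U^A(v,c) − ((1−p)/p)·c_fa·Σ_{v'} P_N(v')·1[c(v')=1]. -/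
noncomputable def UD {V C : Type*} [Fintype V] [Fintype C] (cl : C → V → Bool)
    (R : V → ℝ) (PN : V → ℝ) (cd cfa p : ℝ) (α : V → ℝ) (β : C → ℝ) : ℝ :=
  ∑ v, ∑ c, α v *
    (-(R v - cd * (if cl c v then 1 else 0))
      - (1 - p) / p * cfa * ∑ v', PN v' * (if cl c v' then 1 else 0)) * β c

/-- Nash equilibrium of the classification game. -/
def IsNash {V C : Type*} [Fintype V] [Fintype C] (cl : C → V → Bool) (R : V → ℝ)
    (PN : V → ℝ) (cd cfa p : ℝ) (α : V → ℝ) (β : C → ℝ) : Prop :=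
  IsProb α ∧ IsProb β ∧
  (∀ α', IsProb α' → UA cl R cd α' β ≤ UA cl R cd α β) ∧
  (∀ β', IsProb β' → UD cl R PN cd cfa p α β' ≤ UD cl R PN cd cfa p α β)

/-!
If `v₁` were detected strictly more often than `v₂` although it pays less, attacking `v₁` would be
strictly dominated by attacking `v₂`, so the attacker never plays `v₁`. The defender could then stop
flagging `v₁`: this costs nothing against attacks and saves the false-alarm cost
`(1 - p) / p · c_fa · P_N(v₁)` on every classifier that flagged it. Equilibrium forces this saving to
vanish, so `π_d(v₁) = 0 ≤ π_d(v₂)`.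
-/

open Finset

section BestResponse

variable {X : Type*} [Fintype X]

def IsBestResponse (f : X → ℝ) (μ : X → ℝ) : Prop :=
  IsProb μ ∧ ∀ μ', IsProb μ' → ∑ x, μ' x * f x ≤ ∑ x, μ x * f x

theorem IsProb.map {Y : Type*} [Fintype Y] [DecidableEq Y] {μ : X → ℝ} (hμ : IsProb μ)
    (g : X → Y) : IsProb fun y => ∑ x with g x = y, μ x :=
  ⟨fun _ => sum_nonneg fun x _ => hμ.1 x, by rw [sum_fiberwise, hμ.2]⟩

theorem sum_fiberwise_mul {Y : Type*} [Fintype Y] [DecidableEq Y] (μ : X → ℝ) (g : X → Y)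
    (f : Y → ℝ) : ∑ y, (∑ x with g x = y, μ x) * f y = ∑ x, μ x * f (g x) := by
  simp_rw [sum_mul]
  rw [← sum_fiberwise univ g fun x => μ x * f (g x)]
  refine sum_congr rfl fun y _ => sum_congr rfl fun x hx => ?_
  rw [(mem_filter.1 hx).2]

namespace IsBestResponse

variable {f μ : X → ℝ}

theorem sum_mul_comp_le (h : IsBestResponse f μ) (g : X → X) :
    ∑ x, μ x * f (g x) ≤ ∑ x, μ x * f x := by
  classical
  exact (sum_fiberwise_mul μ g f).symm.trans_le (h.2 _ (h.1.map g))

theorem eq_zero_of_lt (h : IsBestResponse f μ) {x y : X} (hxy : f x < f y) : μ x = 0 := by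
  classical
  have hne : x ≠ y := ne_of_apply_ne f hxy.ne
  set μ' : X → ℝ := μ + Pi.single y (μ x) - Pi.single x (μ x)
  have hμ' : IsProb μ' := by
    refine ⟨fun z => ?_, ?_⟩
    · rcases eq_or_ne z x with rfl | hzx
      · simp [μ', hne]
      · rcases eq_or_ne z y with rfl | hzy
        · simpa [μ', hzx] using add_nonneg (h.1.1 z) (h.1.1 x)
        · simpa [μ', hzx, hzy] using h.1.1 z
    · simp [μ', sum_add_distrib, sum_sub_distrib, h.1.2]
  have hgain : ∑ z, μ' z * f z = ∑ z, μ z * f z + μ x * (f y - f x) := by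
    simp only [μ', Pi.sub_apply, Pi.add_apply, Pi.single_apply, sub_mul, add_mul, ite_mul,
      zero_mul, sum_sub_distrib, sum_add_distrib, sum_ite_eq', mem_univ, if_true]
    ring
  have := h.2 μ' hμ'
  nlinarith [h.1.1 x]

end IsBestResponse

end BestResponse

theorem pid_nonneg {V C : Type*} [Fintype C] {cl : C → V → Bool} {β : C → ℝ} (hβ : IsProb β)
    (v : V) : 0 ≤ pid cl β v :=
  sum_nonneg fun c _ => by split_ifs <;> simp [hβ.1 c]

section ClassificationGame

variable {V C : Type*} [Fintype V] (cl : C → V → Bool) (R PN : V → ℝ) (cd cfa p : ℝ)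

noncomputable def defenderPayoff (α : V → ℝ) (c : C) : ℝ :=
  ∑ v, α v * (-(R v - cd * (if cl c v then 1 else 0))
      - (1 - p) / p * cfa * ∑ v', PN v' * (if cl c v' then 1 else 0))

variable {cl R PN cd cfa p}

theorem defenderPayoff_eq {α : V → ℝ} (hα : ∑ v, α v = 1) (c : C) :
    defenderPayoff cl R PN cd cfa p α c = cd * ∑ v, α v * (if cl c v then 1 else 0)
      - ∑ v, α v * R v - (1 - p) / p * cfa * ∑ v, PN v * (if cl c v then 1 else 0) := by
  simp_rw [defenderPayoff, mul_sub, sum_sub_distrib, ← sum_mul, hα, mul_neg, sum_neg_distrib,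
    mul_sub, sum_sub_distrib, mul_left_comm _ cd, ← mul_sum]
  ring

variable [Fintype C]

theorem UA_eq_sum_mul {β : C → ℝ} (hβ : IsProb β) (α : V → ℝ) :
    UA cl R cd α β = ∑ v, α v * (R v - cd * pid cl β v) := by
  refine sum_congr rfl fun v _ => ?_
  have hsplit : ∀ c, (R v - cd * (if cl c v then 1 else 0)) * β c
      = R v * β c - cd * (if cl c v then β c else 0) := fun c => by split_ifs <;> ring
  simp_rw [mul_assoc, ← mul_sum, hsplit, sum_sub_distrib, ← mul_sum, hβ.2, pid]
  ring

theorem UD_eq_sum_mul (α : V → ℝ) (β : C → ℝ) :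
    UD cl R PN cd cfa p α β = ∑ c, β c * defenderPayoff cl R PN cd cfa p α c := by
  rw [UD, sum_comm]
  simp_rw [defenderPayoff, mul_sum, mul_comm (β _)]

namespace IsNash

variable {α : V → ℝ} {β : C → ℝ}

theorem isBestResponse_attacker (h : IsNash cl R PN cd cfa p α β) :
    IsBestResponse (fun v => R v - cd * pid cl β v) α :=
  ⟨h.1, fun α' hα' => by simpa only [UA_eq_sum_mul h.2.1] using h.2.2.1 α' hα'⟩

theorem isBestResponse_defender (h : IsNash cl R PN cd cfa p α β) :
    IsBestResponse (defenderPayoff cl R PN cd cfa p α) β :=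
  ⟨h.2.1, fun β' hβ' => by simpa only [UD_eq_sum_mul] using h.2.2.2 β' hβ'⟩

end IsNash

end ClassificationGame

section FullClassifierSpace

variable {V : Type*} [Fintype V] [DecidableEq V]

theorem sum_mul_ite_update_false (w : V → ℝ) (c : V → Bool) (v : V) :
    ∑ u, w u * (if Function.update c v false u then 1 else 0)
      = ∑ u, w u * (if c u then 1 else 0) - w v * (if c v then 1 else 0) := by
  have hpoint : ∀ u, w u * (if Function.update c v false u then 1 else 0)
      = w u * (if c u then 1 else 0) - if u = v then w v * (if c v then 1 else 0) else 0 := by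
    intro u
    rcases eq_or_ne u v with rfl | huv
    · simp
    · simp [huv]
  simp_rw [hpoint, sum_sub_distrib, sum_ite_eq', mem_univ, if_true]

variable {R PN : V → ℝ} {cd cfa p : ℝ} {α : V → ℝ}

theorem defenderPayoff_update_false (hα : ∑ v, α v = 1) (c : V → Bool) (v : V) :
    defenderPayoff (fun c v => c v) R PN cd cfa p α (Function.update c v false)
      = defenderPayoff (fun c v => c v) R PN cd cfa p α c
        + ((1 - p) / p * cfa * PN v - cd * α v) * (if c v then 1 else 0) := by
  simp only [defenderPayoff_eq hα, sum_mul_ite_update_false]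
  ring

theorem IsNash.mul_pid_nonpos {β : (V → Bool) → ℝ}
    (h : IsNash (fun c v => c v) R PN cd cfa p α β) (v : V) :
    ((1 - p) / p * cfa * PN v - cd * α v) * pid (fun c v => c v) β v ≤ 0 := by
  have hgain := h.isBestResponse_defender.sum_mul_comp_le (Function.update · v false)
  simp_rw [defenderPayoff_update_false h.1.2, mul_add, sum_add_distrib] at hgain
  have hpid : ∑ c : V → Bool, β c * (((1 - p) / p * cfa * PN v - cd * α v)
      * (if c v then 1 else 0))
        = ((1 - p) / p * cfa * PN v - cd * α v) * pid (fun c v => c v) β v := by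
    rw [pid, mul_sum]
    exact sum_congr rfl fun c _ => by split_ifs <;> ring
  linarith

end FullClassifierSpace

theorem detection_prob_monotone_in_reward_general
    {V : Type*} [Fintype V] [DecidableEq V]
    (R : V → ℝ) (PN : V → ℝ) (cd cfa p : ℝ)
    (hcd : 0 < cd) (hcfa : 0 < cfa) (hp : 0 < p) (hp1 : p < 1)
    (α : V → ℝ) (β : (V → Bool) → ℝ)
    (hne : IsNash (fun c v => c v) R PN cd cfa p α β)
    (v1 v2 : V) (h1 : 0 < PN v1) (hRle : R v1 ≤ R v2) :
    pid (fun c v => c v) β v1 ≤ pid (fun c v => c v) β v2 := by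
  by_contra! hlt
  have hα : α v1 = 0 :=
    hne.isBestResponse_attacker.eq_zero_of_lt (x := v1) (y := v2)
      (by linarith [mul_lt_mul_of_pos_left hlt hcd])
  have hcost : 0 < (1 - p) / p * cfa * PN v1 :=
    mul_pos (mul_pos (div_pos (by linarith) hp) hcfa) h1
  have hpid : pid (fun c v => c v) β v1 ≤ 0 := by
    have := hne.mul_pid_nonpos v1
    rw [hα, mul_zero, sub_zero] at this
    exact nonpos_of_mul_nonpos_right this hcost
  linarith [pid_nonneg (cl := fun c v => c v) hne.2.1 v2]

/-- at a Nash equilibrium of the classification game (full classifier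
space), the detection probability is non-decreasing in the attack reward on the
support of the non-attacker's distribution. -/
theorem detection_prob_monotone_in_reward
    {V : Type*} [Fintype V] [DecidableEq V]
    (R : V → ℝ) (PN : V → ℝ) (cd cfa p : ℝ)
    (hR : ∀ v, 0 ≤ R v) (hcd : 0 < cd) (hcfa : 0 < cfa) (hp : 0 < p) (hp1 : p < 1)
    (hPN1 : ∑ v, PN v = 1) (hPN0 : ∀ v, 0 ≤ PN v)
    (α : V → ℝ) (β : (V → Bool) → ℝ)
    (hne : IsNash (fun c v => c v) R PN cd cfa p α β)
    (v1 v2 : V) (h1 : 0 < PN v1) (h2 : 0 < PN v2) (hRle : R v1 ≤ R v2) :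
    pid (fun c v => c v) β v1 ≤ pid (fun c v => c v) β v2 :=
  detection_prob_monotone_in_reward_general R PN cd cfa p hcd hcfa hp hp1 α β hne v1 v2 h1 hRle
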